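/- For all natural numbers a ≥ 1 and b, the disjunctive sum of (a + 2) copies of nim 2 and b copies of nim 1 has the same misère outcome (win or loss for the player to move) as the disjunctive sum of a copies of nim 2 and b copies of nim 1. In other words, in misère Nim restricted to heaps of size at most 2, when a position contains at least 3 copies of *2, deleting a pair of *2 does not change its outcome; in particular *2 and *2 + *2 + *2 are indistinguishable within this restricted game. -/

import Mathlib

/-- An impartial game: a position is given by the list of its options
(the positions reachable in one move); both players have the same moves. -/
inductive Game : Type
  | node : List Game → Game

namespace Game

/-- The options of a position. -/
def options : Game → List Game
  | node l => l

/-- Disjunctive sum of two games: a move is made in exactly one component. -/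
def add : Game → Game → Game
  | node l, node r =>
      node ((l.attach.map fun x => add x.1 (node r)) ++
            (r.attach.map fun y => add (node l) y.1))
termination_by g h => sizeOf g + sizeOf h
decreasing_by
  · have := List.sizeOf_lt_of_mem x.2; simp_wf; (try simp only [Game.node.sizeOf_spec] at *); omega
  · have := List.sizeOf_lt_of_mem y.2; simp_wf; (try simp only [Game.node.sizeOf_spec] at *); omega

/-- Misère win (for the player to move): the game has no options,
or some option is a misère loss. -/
def MisereWin : Game → Prop
  | node l => l = [] ∨ ∃ x : {a // a ∈ l}, ¬ MisereWin x.1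
decreasing_by
  simp_wf; have := List.sizeOf_lt_of_mem x.2; omega

/-- Misère indistinguishability: adding any game `T` yields the same misère outcome. -/
def Indist (G H : Game) : Prop :=
  ∀ T : Game, MisereWin (add G T) ↔ MisereWin (add H T)

/-- The Nim-heap of size `n`, whose options are `nim 0, …, nim (n-1)`. -/
def nim : ℕ → Game
  | 0 => node []
  | n + 1 => node ((nim n).options ++ [nim n])

/-- Normal-play win (for the player to move): some option is a normal-play loss.
A player unable to move loses. -/
def NormalWin : Game → Prop
  | node l => ∃ x : {a // a ∈ l}, ¬ NormalWin x.1
decreasing_by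
  simp_wf; have := List.sizeOf_lt_of_mem x.2; omega

/-- The Grundy value: the mex of the Grundy values of the options. -/
noncomputable def grundy : Game → ℕ
  | node l => sInf {n : ℕ | ∀ x : {a // a ∈ l}, grundy x.1 ≠ n}
decreasing_by
  simp_wf; have := List.sizeOf_lt_of_mem x.2; omega

/-- The height of a game: the maximal number of moves in a play from it. -/
def height : Game → ℕ
  | node l => (l.attach.map fun x => height x.1 + 1).foldr max 0
decreasing_by
  simp_wf; have := List.sizeOf_lt_of_mem x.2; omega

/-- A canonical tree: duplicate options are removed, hereditarily. -/
def Canonical : Game → Prop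
  | node l => l.Nodup ∧ ∀ x : {a // a ∈ l}, Canonical x.1
decreasing_by
  simp_wf; have := List.sizeOf_lt_of_mem x.2; omega

/-- Extensional (set-theoretic) equality of game trees. -/
def ExtEq : Game → Game → Prop
  | node l, node r =>
      (∀ x : {a // a ∈ l}, ∃ y : {b // b ∈ r}, ExtEq x.1 y.1) ∧
      (∀ y : {b // b ∈ r}, ∃ x : {a // a ∈ l}, ExtEq x.1 y.1)
termination_by g _ => sizeOf g
decreasing_by
  · have := List.sizeOf_lt_of_mem x.2; simp_wf; (try simp only [Game.node.sizeOf_spec] at *); omega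
  · have := List.sizeOf_lt_of_mem x.2; simp_wf; (try simp only [Game.node.sizeOf_spec] at *); omega

/-- The disjunctive sum of `n` copies of a game. -/
def copies : ℕ → Game → Game
  | 0, _ => node []
  | n + 1, g => add g (copies n g)

/-- `G` is a reducer of `H` if `H` is obtained from `G` by adding reversible
moves `R₁, R₂, …`: the options of `H` are those of `G` together with the `Rⱼ`,
each `Rⱼ` having `G` among its options; when `G` is empty one additionally
requires `H` to be a misère win. -/
def Reducer (G H : Game) : Prop :=
  ∃ Rs : List Game,
    (∀ x, x ∈ H.options ↔ x ∈ G.options ∨ x ∈ Rs) ∧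
    (∀ R ∈ Rs, G ∈ R.options) ∧
    (G.options = [] → MisereWin H)

/-- A canonical tree is reduced if its only reducer is itself (as a set of
options) and all of its options are reduced. -/
def Reduced : Game → Prop
  | node l =>
      (∀ G, Reducer G (node l) → ∀ x, x ∈ G.options ↔ x ∈ l) ∧
      ∀ x : {a // a ∈ l}, Reduced x.1
decreasing_by
  simp_wf; have := List.sizeOf_lt_of_mem x.2; omega

end Game

/-!
Only the numbers `a` of `*2` and `b` of `*1` in such a sum matter. By induction on `2a + b`,
the sum is a misère win iff either `a = 0` and `b` is even, or `a > 0` and the nim-sum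
`2 (a mod 2) ⊕ (b mod 2)` is nonzero (Bouton's rule for misère Nim). Replacing `a ≥ 1` by
`a + 2` preserves both `a > 0` and the parity of `a`.
-/

namespace Game

lemma options_node (l : List Game) : (node l).options = l := rfl

lemma mem_options_add {x : Game} (G H : Game) :
    x ∈ (add G H).options ↔
      (∃ g ∈ G.options, x = add g H) ∨ (∃ h ∈ H.options, x = add G h) := by
  obtain ⟨l⟩ := G; obtain ⟨r⟩ := H
  rw [add]
  simp [options, eq_comm]

lemma misereWin_iff_options (G : Game) :
    MisereWin G ↔ G.options = [] ∨ ∃ x ∈ G.options, ¬ MisereWin x := by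
  obtain ⟨l⟩ := G
  rw [MisereWin]
  simp [options]

lemma mem_options_nim {x : Game} {n : ℕ} : x ∈ (nim n).options ↔ ∃ m < n, x = nim m := by
  induction n with
  | zero => simp [nim, options]
  | succ n ih =>
    rw [nim, options_node, List.mem_append, ih, List.mem_singleton]
    constructor
    · rintro (⟨m, hm, rfl⟩ | rfl)
      exacts [⟨m, by omega, rfl⟩, ⟨n, by omega, rfl⟩]
    · rintro ⟨m, hm, rfl⟩
      rcases Nat.lt_succ_iff_lt_or_eq.mp hm with hm | rfl
      exacts [Or.inl ⟨m, hm, rfl⟩, Or.inr rfl]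

/-- The effect of a move on the counts `a` of `*2` and `b` of `*1`: empty a `*2`,
reduce a `*2` to `*1`, or empty a `*1`. -/
def HeapMove (a b a' b' : ℕ) : Prop :=
  (a = a' + 1 ∧ b' = b) ∨ (a = a' + 1 ∧ b' = b + 1) ∨ (a' = a ∧ b = b' + 1)

lemma HeapMove.lt {a b a' b' : ℕ} (hm : HeapMove a b a' b') : 2 * a' + b' < 2 * a + b := by
  unfold HeapMove at hm; omega

lemma HeapMove.of_add {a b c d a' b' : ℕ} (hm : HeapMove (a + c) (b + d) a' b') :
    (HeapMove a b (a' - c) (b' - d) ∧ c ≤ a' ∧ d ≤ b') ∨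
      (HeapMove c d (a' - a) (b' - b) ∧ a ≤ a' ∧ b ≤ b') := by
  unfold HeapMove at *; omega

def SmallNimWin (a b : ℕ) : Prop :=
  (a = 0 ∧ b % 2 = 0) ∨ (a ≠ 0 ∧ (a % 2 = 1 ∨ b % 2 = 1))

lemma smallNimWin_iff_exists_move (a b : ℕ) :
    SmallNimWin a b ↔
      (a = 0 ∧ b = 0) ∨ ∃ a' b', HeapMove a b a' b' ∧ ¬ SmallNimWin a' b' := by
  constructor
  · intro hw
    unfold SmallNimWin at hw
    by_cases h0 : a = 0 ∧ b = 0
    · exact Or.inl h0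
    refine Or.inr ?_
    unfold HeapMove SmallNimWin
    rcases Nat.even_or_odd a with ⟨k, rfl⟩ | ⟨k, rfl⟩
    · exact ⟨k + k, b - 1, by omega, by omega⟩
    · rcases Nat.eq_zero_or_pos k with rfl | hk <;>
        rcases Nat.mod_two_eq_zero_or_one b with hb | hb
      · exact ⟨0, b + 1, by omega, by omega⟩
      · exact ⟨0, b, by omega, by omega⟩
      · exact ⟨2 * k, b, by omega, by omega⟩
      · exact ⟨2 * k, b + 1, by omega, by omega⟩
  · rintro (⟨rfl, rfl⟩ | ⟨a', b', hm, hw⟩)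
    · exact Or.inl ⟨rfl, rfl⟩
    · unfold SmallNimWin HeapMove at *; omega

inductive HeapCount : Game → ℕ → ℕ → Prop
  | nim_zero : HeapCount (nim 0) 0 0
  | nim_one : HeapCount (nim 1) 0 1
  | nim_two : HeapCount (nim 2) 1 0
  | add {G H a b c d} : HeapCount G a b → HeapCount H c d → HeapCount (add G H) (a + c) (b + d)

namespace HeapCount

lemma add_of_eq {G H : Game} {a b c d a' b' : ℕ} (hG : HeapCount G a b) (hH : HeapCount H c d)
    (ha : a + c = a') (hb : b + d = b') : HeapCount (Game.add G H) a' b' :=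
  ha ▸ hb ▸ hG.add hH

lemma copies {g : Game} {a b : ℕ} (h : HeapCount g a b) (n : ℕ) :
    HeapCount (Game.copies n g) (n * a) (n * b) := by
  induction n with
  | zero => rw [Nat.zero_mul, Nat.zero_mul]; exact nim_zero
  | succ n ih => exact h.add_of_eq ih (by ring) (by ring)

lemma exists_of_mem_options {G : Game} {a b : ℕ} (h : HeapCount G a b) {x : Game}
    (hx : x ∈ G.options) : ∃ a' b', HeapCount x a' b' ∧ HeapMove a b a' b' := by
  induction h generalizing x with
  | nim_zero => simp [mem_options_nim] at hx
  | nim_one =>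
    obtain ⟨m, hm, rfl⟩ := mem_options_nim.mp hx
    obtain rfl : m = 0 := by omega
    exact ⟨0, 0, nim_zero, by unfold HeapMove; omega⟩
  | nim_two =>
    obtain ⟨m, hm, rfl⟩ := mem_options_nim.mp hx
    obtain rfl | rfl : m = 0 ∨ m = 1 := by omega
    · exact ⟨0, 0, nim_zero, by unfold HeapMove; omega⟩
    · exact ⟨0, 1, nim_one, by unfold HeapMove; omega⟩
  | @add G H a b c d hG hH ihG ihH =>
    rcases (mem_options_add G H).mp hx with ⟨g, hg, rfl⟩ | ⟨h, hh, rfl⟩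
    · obtain ⟨a', b', hg', hm⟩ := ihG hg
      exact ⟨a' + c, b' + d, hg'.add hH, by unfold HeapMove at *; omega⟩
    · obtain ⟨c', d', hh', hm⟩ := ihH hh
      exact ⟨a + c', b + d', hG.add hh', by unfold HeapMove at *; omega⟩

lemma exists_mem_options {G : Game} {a b a' b' : ℕ} (h : HeapCount G a b)
    (hm : HeapMove a b a' b') : ∃ x ∈ G.options, HeapCount x a' b' := by
  induction h generalizing a' b' with
  | nim_zero => unfold HeapMove at hm; omega
  | nim_one =>
    obtain ⟨rfl, rfl⟩ : a' = 0 ∧ b' = 0 := by unfold HeapMove at hm; omega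
    exact ⟨nim 0, mem_options_nim.mpr ⟨0, by omega, rfl⟩, nim_zero⟩
  | nim_two =>
    obtain ⟨rfl, rfl | rfl⟩ : a' = 0 ∧ (b' = 0 ∨ b' = 1) := by unfold HeapMove at hm; omega
    · exact ⟨nim 0, mem_options_nim.mpr ⟨0, by omega, rfl⟩, nim_zero⟩
    · exact ⟨nim 1, mem_options_nim.mpr ⟨1, by omega, rfl⟩, nim_one⟩
  | @add G H a b c d hG hH ihG ihH =>
    rcases hm.of_add with ⟨hm, hc, hd⟩ | ⟨hm, ha, hb⟩
    · obtain ⟨g, hg, hg'⟩ := ihG hm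
      exact ⟨_, (mem_options_add G H).mpr (Or.inl ⟨g, hg, rfl⟩),
        hg'.add_of_eq hH (by omega) (by omega)⟩
    · obtain ⟨h, hh, hh'⟩ := ihH hm
      exact ⟨_, (mem_options_add G H).mpr (Or.inr ⟨h, hh, rfl⟩),
        hG.add_of_eq hh' (by omega) (by omega)⟩

lemma options_eq_nil_iff {G : Game} {a b : ℕ} (h : HeapCount G a b) :
    G.options = [] ↔ a = 0 ∧ b = 0 := by
  constructor
  · intro hG
    by_contra h0
    have hm : HeapMove a b (a - 1) (if a = 0 then b - 1 else b) := by
      unfold HeapMove; split_ifs <;> omega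
    obtain ⟨x, hx, -⟩ := h.exists_mem_options hm
    simp [hG] at hx
  · rintro ⟨rfl, rfl⟩
    refine List.eq_nil_iff_forall_not_mem.mpr fun x hx => ?_
    obtain ⟨a', b', -, hm⟩ := h.exists_of_mem_options hx
    unfold HeapMove at hm; omega

theorem misereWin_iff {G : Game} {a b : ℕ} (h : HeapCount G a b) :
    MisereWin G ↔ SmallNimWin a b := by
  induction hn : 2 * a + b using Nat.strong_induction_on generalizing G a b with
  | _ n ih =>
  rw [misereWin_iff_options, smallNimWin_iff_exists_move, h.options_eq_nil_iff]
  refine or_congr Iff.rfl ⟨?_, ?_⟩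
  · rintro ⟨x, hx, hlose⟩
    obtain ⟨a', b', hx', hm⟩ := h.exists_of_mem_options hx
    exact ⟨a', b', hm, (ih _ (hn ▸ hm.lt) hx' rfl).not.mp hlose⟩
  · rintro ⟨a', b', hm, hlose⟩
    obtain ⟨x, hx, hx'⟩ := h.exists_mem_options hm
    exact ⟨x, hx, (ih _ (hn ▸ hm.lt) hx' rfl).not.mpr hlose⟩

end HeapCount

end Game

open Game in
/-- For `a ≥ 1`, the sum of `a + 2` copies of `nim 2` and `b`
copies of `nim 1` has the same misère outcome as the sum of `a` copies of
`nim 2` and `b` copies of `nim 1`: deleting a pair of `*2` from a position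
containing at least 3 copies of `*2` does not change the outcome. -/
theorem stmt11 (a b : ℕ) (ha : 1 ≤ a) :
    (MisereWin (add (copies (a + 2) (nim 2)) (copies b (nim 1))) ↔
     MisereWin (add (copies a (nim 2)) (copies b (nim 1)))) := by
  have count (n : ℕ) := (HeapCount.nim_two.copies n).add (HeapCount.nim_one.copies b)
  rw [(count (a + 2)).misereWin_iff, (count a).misereWin_iff]
  simp only [SmallNimWin, mul_one, mul_zero, add_zero, zero_add]
  omega
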